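/- The five-term identity in Y-system form: for positive reals x₁,…,x₅ satisfying x_i x_{i+2} = 1 + x_{i+1} (indices mod 5), one has R(x₁) + R(x₂) = R(1/x₅) + R(1/x₄) + R(1/x₃), where R(u) = L(u/(1+u)) and L is the Rogers dilogarithm. -/

import Mathlib

/-- The Euler dilogarithm `Li₂(x) = -∫₀ˣ log(1-t)/t dt` (for real `x ≤ 1`). -/
noncomputable def Li2 (x : ℝ) : ℝ := -∫ t in (0:ℝ)..x, Real.log (1 - t) / t


open Real Set Filter MeasureTheory intervalIntegral
open scoped Topology

lemma g_meas : Measurable (fun t : ℝ => Real.log (1 - t) / t) := by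
  exact (Real.measurable_log.comp (measurable_const.sub measurable_id)).div measurable_id

lemma g_bound {b : ℝ} (hb : b < 1) {t : ℝ} (ht : t ∈ Set.Ioc 0 b) :
    ‖Real.log (1 - t) / t‖ ≤ (1 - b)⁻¹ := by
  obtain ⟨ht0, htb⟩ := ht
  have h1t : 0 < 1 - t := by linarith
  have hneg : Real.log (1 - t) ≤ 0 := Real.log_nonpos (by linarith) (by linarith)
  have key : -Real.log (1 - t) ≤ t / (1 - t) := by
    rw [← Real.log_inv]
    have h := Real.log_le_sub_one_of_pos (inv_pos.mpr h1t)
    have : (1 - t)⁻¹ - 1 = t / (1 - t) := by field_simp; ring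
    linarith
  have h2 : t / (1 - t) ≤ t / (1 - b) := by
    apply div_le_div_of_nonneg_left ht0.le (by linarith) (by linarith)
  rw [norm_div, Real.norm_eq_abs, Real.norm_eq_abs, abs_of_nonpos hneg, abs_of_pos ht0,
    div_le_iff₀ ht0]
  simp only [div_eq_mul_inv] at key h2
  have : t * (1 - b)⁻¹ = (1 - b)⁻¹ * t := mul_comm _ _
  linarith

lemma g_intable {b : ℝ} (hb0 : 0 ≤ b) (hb : b < 1) :
    IntervalIntegrable (fun t : ℝ => Real.log (1 - t) / t) volume 0 b := by
  rw [intervalIntegrable_iff_integrableOn_Ioc_of_le hb0]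
  exact Measure.integrableOn_of_bounded measure_Ioc_lt_top.ne g_meas.aestronglyMeasurable
    ((ae_restrict_iff' measurableSet_Ioc).2 (ae_of_all _ fun t ht => g_bound hb ht))

lemma g_contAt {x : ℝ} (hx : x ∈ Set.Ioo (0:ℝ) 1) :
    ContinuousAt (fun t : ℝ => Real.log (1 - t) / t) x := by
  have h1 : ContinuousAt (fun t : ℝ => Real.log (1 - t)) x :=
    (Real.continuousAt_log (by intro h; linarith [hx.2, h.symm ▸ (rfl : (0:ℝ)=0)])).comp
      ((continuous_const.sub continuous_id).continuousAt)
  exact h1.div continuousAt_id hx.1.ne'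

lemma li2_hasDerivAt {x : ℝ} (hx : x ∈ Set.Ioo (0:ℝ) 1) :
    HasDerivAt Li2 (-(Real.log (1 - x) / x)) x := by
  have h1 : HasDerivAt (fun u : ℝ => ∫ t in (0:ℝ)..u, Real.log (1 - t) / t)
      (Real.log (1 - x) / x) x :=
    integral_hasDerivAt_right (g_intable hx.1.le hx.2)
      ⟨Set.univ, Filter.univ_mem, g_meas.aestronglyMeasurable.restrict⟩ (g_contAt hx)
  exact h1.neg

/-- The Rogers dilogarithm `L(x) = Li₂(x) + (1/2) log x log(1-x)` for `0 < x < 1`. -/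
noncomputable def RogersL (x : ℝ) : ℝ := Li2 x + (1 / 2) * Real.log x * Real.log (1 - x)


lemma rogersL_hasDerivAt {x : ℝ} (hx : x ∈ Set.Ioo (0:ℝ) 1) :
    HasDerivAt RogersL
      (-(1/2) * (Real.log (1 - x) / x + Real.log x / (1 - x))) x := by
  have hx1 : (0:ℝ) < x := hx.1
  have hx2 : (0:ℝ) < 1 - x := by linarith [hx.2]
  have h1 := li2_hasDerivAt hx
  have hl1x : HasDerivAt (fun t : ℝ => Real.log (1 - t)) (-(1 - x)⁻¹) x := by
    have hs : HasDerivAt (fun t : ℝ => 1 - t) (-1) x := (hasDerivAt_id x).const_sub 1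
    have := (Real.hasDerivAt_log hx2.ne').comp x hs
    simpa [Function.comp_def] using this
  have h2 : HasDerivAt (fun t : ℝ => (1/2 : ℝ) * Real.log t * Real.log (1 - t))
      ((1/2) * x⁻¹ * Real.log (1 - x) + (1/2) * Real.log x * (-(1 - x)⁻¹)) x :=
    (((Real.hasDerivAt_log hx1.ne').const_mul (1/2 : ℝ)).mul hl1x)
  have h := h1.add h2
  have hR : RogersL = fun x => Li2 x + (1 / 2) * Real.log x * Real.log (1 - x) := rfl
  rw [hR]
  refine h.congr_deriv ?_
  ring

lemma tendsto_rogersL_zero : Tendsto RogersL (𝓝[>] (0:ℝ)) (𝓝 0) := by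
  have hLi2 : Tendsto Li2 (𝓝[>] (0:ℝ)) (𝓝 0) := by
    apply squeeze_zero_norm' (a := fun x : ℝ => 2 * |x|)
    · filter_upwards [Ioo_mem_nhdsGT_of_mem (by constructor <;> norm_num :
        (0:ℝ) ∈ Set.Ico 0 (1/2))] with x hx
      have hb : ∀ t ∈ Set.uIoc (0:ℝ) x, ‖Real.log (1 - t) / t‖ ≤ (1 - 1/2 : ℝ)⁻¹ := by
        intro t ht
        rw [Set.uIoc_of_le hx.1.le] at ht
        exact g_bound (by norm_num) ⟨ht.1, le_trans ht.2 hx.2.le⟩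
      have := intervalIntegral.norm_integral_le_of_norm_le_const hb
      rw [show Li2 x = -∫ t in (0:ℝ)..x, Real.log (1 - t) / t from rfl, norm_neg]
      calc ‖∫ t in (0:ℝ)..x, Real.log (1 - t) / t‖ ≤ (1 - 1/2 : ℝ)⁻¹ * |x - 0| := this
        _ = 2 * |x| := by norm_num
    · have : Tendsto (fun x : ℝ => 2 * |x|) (𝓝 0) (𝓝 0) := by
        exact (continuous_const.mul continuous_abs).tendsto' (0:ℝ) 0 (by simp)
      exact this.mono_left nhdsWithin_le_nhds
  have hslope : Tendsto (fun x : ℝ => Real.log (1 - x) / x) (𝓝[>] (0:ℝ)) (𝓝 (-1)) := by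
    have hd : HasDerivAt (fun t : ℝ => Real.log (1 - t)) (-1) (0:ℝ) := by
      have hs : HasDerivAt (fun t : ℝ => 1 - t) (-1) (0:ℝ) := (hasDerivAt_id (0:ℝ)).const_sub 1
      have h2 := (Real.hasDerivAt_log (show (1:ℝ) - 0 ≠ 0 by norm_num)).comp (0:ℝ) hs
      norm_num at h2
      exact h2
    have h := hasDerivAt_iff_tendsto_slope.mp hd
    have h2 : Tendsto (slope (fun t : ℝ => Real.log (1 - t)) 0) (𝓝[>] (0:ℝ)) (𝓝 (-1)) :=
      h.mono_left (nhdsWithin_mono 0 (fun x hx => ne_of_gt hx))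
    apply h2.congr'
    filter_upwards [self_mem_nhdsWithin] with x hx
    simp [slope_def_field]
  have hxlog : Tendsto (fun x : ℝ => Real.log x * x) (𝓝[>] (0:ℝ)) (𝓝 0) := by
    have := tendsto_log_mul_rpow_nhdsGT_zero one_pos
    apply this.congr'
    filter_upwards [self_mem_nhdsWithin] with x hx
    rw [Real.rpow_one]
  have hprod : Tendsto (fun x : ℝ => Real.log x * Real.log (1 - x)) (𝓝[>] (0:ℝ)) (𝓝 0) := by
    have h := hxlog.mul hslope
    rw [zero_mul] at h
    apply h.congr'
    filter_upwards [self_mem_nhdsWithin] with x hx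
    have hx0 : x ≠ 0 := ne_of_gt hx
    field_simp
  have h := hLi2.add (hprod.const_mul (1/2 : ℝ))
  simp only [mul_zero, add_zero] at h
  apply h.congr
  intro x
  show Li2 x + 1/2 * (Real.log x * Real.log (1-x)) = RogersL x
  rw [show RogersL x = Li2 x + (1 / 2) * Real.log x * Real.log (1 - x) from rfl]
  ring

lemma abel_five {x y : ℝ} (hx : x ∈ Set.Ioo (0:ℝ) 1) (hy : y ∈ Set.Ioo (0:ℝ) 1) :
    RogersL x + RogersL y =
      RogersL (x*y) + RogersL (x*(1-y)/(1-x*y)) + RogersL (y*(1-x)/(1-x*y)) := by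
  obtain ⟨hy0, hy1⟩ := hy
  set F : ℝ → ℝ := fun z => RogersL z + RogersL y - RogersL (z*y)
    - RogersL (z*(1-y)/(1-z*y)) - RogersL (y*(1-z)/(1-z*y)) with hF
  have mem : ∀ z ∈ Set.Ioo (0:ℝ) 1, (z*y ∈ Set.Ioo (0:ℝ) 1) ∧
      (z*(1-y)/(1-z*y) ∈ Set.Ioo (0:ℝ) 1) ∧ (y*(1-z)/(1-z*y) ∈ Set.Ioo (0:ℝ) 1) ∧
      0 < 1 - z*y := by
    rintro z ⟨hz0, hz1⟩
    have hd : 0 < 1 - z*y := by nlinarith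
    have h1z : (0:ℝ) < 1 - z := by linarith
    have h1y : (0:ℝ) < 1 - y := by linarith
    refine ⟨⟨by positivity, by nlinarith⟩, ⟨by positivity, ?_⟩, ⟨by positivity, ?_⟩, hd⟩
    · rw [div_lt_one hd]; nlinarith
    · rw [div_lt_one hd]; nlinarith
  have hderiv : ∀ z ∈ Set.Ioo (0:ℝ) 1, HasDerivAt F 0 z := by
    rintro z hz
    obtain ⟨hz0, hz1⟩ := hz
    obtain ⟨m1, m2, m3, hd⟩ := mem z ⟨hz0, hz1⟩
    have hz0' : z ≠ 0 := ne_of_gt hz0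
    have hy0' : y ≠ 0 := ne_of_gt hy0
    have h1z : (0:ℝ) < 1 - z := by linarith
    have h1y : (0:ℝ) < 1 - y := by linarith
    have h1z' : (1:ℝ) - z ≠ 0 := ne_of_gt h1z
    have h1y' : (1:ℝ) - y ≠ 0 := ne_of_gt h1y
    have hdne : (1:ℝ) - z*y ≠ 0 := ne_of_gt hd
    have H1 := rogersL_hasDerivAt (Set.mem_Ioo.2 ⟨hz0, hz1⟩)
    have Hmul : HasDerivAt (fun z : ℝ => z*y) y z := by
      simpa using (hasDerivAt_id z).mul_const y
    have H2 : HasDerivAt (fun z : ℝ => RogersL (z*y))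
        ((-(1/2) * (Real.log (1 - z*y) / (z*y) + Real.log (z*y) / (1 - z*y))) * y) z :=
      by have := (rogersL_hasDerivAt m1).comp z Hmul; exact this
    have Hnum : HasDerivAt (fun z : ℝ => z*(1-y)) (1-y) z := by
      simpa using (hasDerivAt_id z).mul_const (1-y)
    have Hden : HasDerivAt (fun z : ℝ => 1 - z*y) (-y) z := by
      simpa using Hmul.const_sub 1
    have Hu : HasDerivAt (fun z : ℝ => z*(1-y)/(1-z*y))
        (((1-y)*(1-z*y) - z*(1-y)*(-y))/(1-z*y)^2) z := Hnum.div Hden hdne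
    have H3 : HasDerivAt (fun z : ℝ => RogersL (z*(1-y)/(1-z*y)))
        ((-(1/2) * (Real.log (1 - z*(1-y)/(1-z*y)) / (z*(1-y)/(1-z*y))
          + Real.log (z*(1-y)/(1-z*y)) / (1 - z*(1-y)/(1-z*y))))
          * (((1-y)*(1-z*y) - z*(1-y)*(-y))/(1-z*y)^2)) z :=
      by have := (rogersL_hasDerivAt m2).comp z Hu; exact this
    have Hnum2 : HasDerivAt (fun z : ℝ => y*(1-z)) (-y) z := by
      have := ((hasDerivAt_id z).const_sub 1).const_mul y
      simpa using this
    have Hv : HasDerivAt (fun z : ℝ => y*(1-z)/(1-z*y))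
        ((-y*(1-z*y) - y*(1-z)*(-y))/(1-z*y)^2) z := Hnum2.div Hden hdne
    have H4 : HasDerivAt (fun z : ℝ => RogersL (y*(1-z)/(1-z*y)))
        ((-(1/2) * (Real.log (1 - y*(1-z)/(1-z*y)) / (y*(1-z)/(1-z*y))
          + Real.log (y*(1-z)/(1-z*y)) / (1 - y*(1-z)/(1-z*y))))
          * ((-y*(1-z*y) - y*(1-z)*(-y))/(1-z*y)^2)) z :=
      by have := (rogersL_hasDerivAt m3).comp z Hv; exact this
    have Htot := (((H1.add_const (RogersL y)).sub H2).sub H3).sub H4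
    have e1 : (1:ℝ) - z*(1-y)/(1-z*y) = (1-z)/(1-z*y) := by field_simp; ring
    have e2 : (1:ℝ) - y*(1-z)/(1-z*y) = (1-y)/(1-z*y) := by
      rw [eq_div_iff hdne, sub_mul, div_mul_cancel₀ _ hdne]; ring
    refine Htot.congr_deriv ?_
    rw [e1, e2, Real.log_mul hz0' hy0',
      Real.log_div (mul_ne_zero hz0' h1y') hdne,
      Real.log_div (mul_ne_zero hy0' h1z') hdne,
      Real.log_div h1z' hdne, Real.log_div h1y' hdne,
      Real.log_mul hz0' h1y', Real.log_mul hy0' h1z']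
    field_simp
    ring
  have hconst : ∀ a ∈ Set.Ioo (0:ℝ) 1, ∀ b ∈ Set.Ioo (0:ℝ) 1, a < b → F a = F b := by
    intro a ha b hb hab
    have hsub : Set.Icc a b ⊆ Set.Ioo (0:ℝ) 1 := fun t ht =>
      ⟨lt_of_lt_of_le ha.1 ht.1, lt_of_le_of_lt ht.2 hb.2⟩
    have hcont : ContinuousOn F (Set.Icc a b) := fun t ht =>
      ((hderiv t (hsub ht)).continuousAt).continuousWithinAt
    obtain ⟨c, _, hceq⟩ := exists_hasDerivAt_eq_slope F (fun _ => 0) hab hcont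
      (fun t ht => hderiv t (hsub (Set.Ioo_subset_Icc_self ht)))
    have hba : b - a ≠ 0 := by linarith
    rw [eq_comm, div_eq_iff hba] at hceq
    simp at hceq
    linarith
  have hlim : Tendsto F (𝓝[>] (0:ℝ)) (𝓝 0) := by
    have t2 : Tendsto (fun z : ℝ => RogersL (z*y)) (𝓝[>] (0:ℝ)) (𝓝 0) := by
      apply tendsto_rogersL_zero.comp
      rw [tendsto_nhdsWithin_iff]
      refine ⟨?_, ?_⟩
      · have h : Tendsto (fun z : ℝ => z*y) (𝓝 0) (𝓝 0) := by
          exact (continuous_id.mul continuous_const).tendsto' (0:ℝ) 0 (by simp)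
        exact h.mono_left nhdsWithin_le_nhds
      · filter_upwards [self_mem_nhdsWithin] with z hz
        exact mul_pos hz hy0
    have t3 : Tendsto (fun z : ℝ => RogersL (z*(1-y)/(1-z*y))) (𝓝[>] (0:ℝ)) (𝓝 0) := by
      apply tendsto_rogersL_zero.comp
      rw [tendsto_nhdsWithin_iff]
      refine ⟨?_, ?_⟩
      · have hc : ContinuousAt (fun z : ℝ => z*(1-y)/(1-z*y)) 0 := by
          apply ContinuousAt.div
          · exact (continuous_id.mul continuous_const).continuousAt
          · exact (continuous_const.sub (continuous_id.mul continuous_const)).continuousAt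
          · norm_num
        have h := hc.tendsto
        norm_num at h
        exact h.mono_left nhdsWithin_le_nhds
      · filter_upwards [Ioo_mem_nhdsGT_of_mem (Set.left_mem_Ico.2 one_pos)] with z hz
        exact ((mem z hz).2.1).1
    have t4 : Tendsto (fun z : ℝ => RogersL (y*(1-z)/(1-z*y))) (𝓝[>] (0:ℝ)) (𝓝 (RogersL y)) := by
      have hc : ContinuousAt (fun z : ℝ => y*(1-z)/(1-z*y)) 0 := by
        apply ContinuousAt.div
        · exact (continuous_const.mul (continuous_const.sub continuous_id)).continuousAt
        · exact (continuous_const.sub (continuous_id.mul continuous_const)).continuousAt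
        · norm_num
      have h := hc.tendsto
      norm_num at h
      have hRc : ContinuousAt RogersL y :=
        (rogersL_hasDerivAt (Set.mem_Ioo.2 ⟨hy0, hy1⟩)).continuousAt
      exact (hRc.tendsto.comp (h.mono_left nhdsWithin_le_nhds))
    have t1 : Tendsto (fun z : ℝ => RogersL z + RogersL y) (𝓝[>] (0:ℝ)) (𝓝 (0 + RogersL y)) :=
      tendsto_rogersL_zero.add (tendsto_const_nhds (x := RogersL y))
    have h := (((t1.sub t2).sub t3).sub t4)
    have hval : ((((0:ℝ) + RogersL y) - 0) - 0) - RogersL y = 0 := by ring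
    rw [hval] at h
    exact h
  obtain ⟨hx0, hx1⟩ := hx
  have hFx : F x = 0 := by
    have hev : F =ᶠ[𝓝[>] (0:ℝ)] fun _ => F x := by
      filter_upwards [Ioo_mem_nhdsGT_of_mem (Set.left_mem_Ico.2 one_pos)] with z hz
      rcases lt_trichotomy z x with h|h|h
      · exact hconst z hz x ⟨hx0, hx1⟩ h
      · rw [h]
      · exact (hconst x ⟨hx0, hx1⟩ z hz h).symm
    have h2 : Tendsto (fun _ : ℝ => F x) (𝓝[>] (0:ℝ)) (𝓝 0) := hlim.congr' hev
    have h3 : Tendsto (fun _ : ℝ => F x) (𝓝[>] (0:ℝ)) (𝓝 (F x)) := tendsto_const_nhds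
    exact (tendsto_nhds_unique h3 h2)
  simp only [hF] at hFx
  linarith

/-- `R(u) = L(u/(1+u))` for `u > 0`. -/
noncomputable def RogersR (u : ℝ) : ℝ := RogersL (u / (1 + u))

/-- Volkov's five-term identity in Y-system form: if positive `x₁,…,x₅` satisfy the A₂
Y-system relations (indices mod 5), then `R(x₁) + R(x₂) = R(1/x₅) + R(1/x₄) + R(1/x₃)`. -/
theorem rogersR_ysystem_five_term (x₁ x₂ x₃ x₄ x₅ : ℝ)
    (h₁ : 0 < x₁) (h₂ : 0 < x₂) (h₃ : 0 < x₃) (h₄ : 0 < x₄) (h₅ : 0 < x₅)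
    (e₁ : x₁ * x₃ = 1 + x₂) (e₂ : x₂ * x₄ = 1 + x₃) (e₃ : x₃ * x₅ = 1 + x₄)
    (e₄ : x₄ * x₁ = 1 + x₅) (e₅ : x₅ * x₂ = 1 + x₁) :
    RogersR x₁ + RogersR x₂ = RogersR (1 / x₅) + RogersR (1 / x₄) + RogersR (1 / x₃) := by
  have h1p : (0:ℝ) < 1 + x₁ := by linarith
  have h2p : (0:ℝ) < 1 + x₂ := by linarith
  have h12p : (0:ℝ) < 1 + x₁ + x₂ := by linarith
  set x : ℝ := x₁ / (1 + x₁) with hxdef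
  set y : ℝ := x₂ / (1 + x₂) with hydef
  have hx : x ∈ Set.Ioo (0:ℝ) 1 := ⟨by positivity, by rw [div_lt_one h1p]; linarith⟩
  have hy : y ∈ Set.Ioo (0:ℝ) 1 := ⟨by positivity, by rw [div_lt_one h2p]; linarith⟩
  have hx3 : x₃ = (1 + x₂) / x₁ := by
    rw [eq_div_iff (ne_of_gt h₁)]; linarith [e₁]
  have hx5 : x₅ = (1 + x₁) / x₂ := by
    rw [eq_div_iff (ne_of_gt h₂)]; linarith [e₅]
  have hx4 : x₄ = (1 + x₁ + x₂) / (x₁ * x₂) := by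
    rw [eq_div_iff (by positivity : x₁ * x₂ ≠ 0)]
    have := e₂
    rw [hx3] at this
    field_simp at this
    linarith [this]
  have h1ne : (1:ℝ) + x₁ ≠ 0 := ne_of_gt h1p
  have h2ne : (1:ℝ) + x₂ ≠ 0 := ne_of_gt h2p
  have h12ne : (1:ℝ) + x₁ + x₂ ≠ 0 := ne_of_gt h12p
  have key1 : RogersR x₁ = RogersL x := rfl
  have key2 : RogersR x₂ = RogersL y := rfl
  have hne : (1:ℝ) - x * y ≠ 0 := by
    have : (1:ℝ) - x * y = (1 + x₁ + x₂) / ((1 + x₁) * (1 + x₂)) := by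
      rw [hxdef, hydef]; field_simp; ring
    rw [this]; positivity
  have key4 : RogersR (1 / x₄) = RogersL (x * y) := by
    unfold RogersR
    congr 1
    rw [hx4, hxdef, hydef]
    field_simp
    ring
  have key5 : RogersR (1 / x₅) = RogersL (y * (1 - x) / (1 - x * y)) := by
    unfold RogersR
    congr 1
    rw [div_eq_div_iff (by positivity : (1:ℝ) + 1/x₅ ≠ 0) hne, hx5, hxdef, hydef]
    field_simp
    ring
  have key3 : RogersR (1 / x₃) = RogersL (x * (1 - y) / (1 - x * y)) := by
    unfold RogersR
    congr 1
    rw [div_eq_div_iff (by positivity : (1:ℝ) + 1/x₃ ≠ 0) hne, hx3, hxdef, hydef]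
    field_simp
    ring
  rw [key1, key2, key3, key4, key5]
  linarith [abel_five hx hy]
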